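/- arXiv:2307.06086 — 2 statements merged into one kernel-verified Lean document; each statement's English description precedes it below -/
import Mathlib

section
/- Let Ω ⊊ ℝ^N be a nonempty convex bounded open set and let α > 0. Then ∫_Ω d_Ω(x)^α dx ≤ |Ω| · r_Ω^α / (α+1), where |Ω| is the Lebesgue measure of Ω. -/
open MeasureTheory

/-- Distance to the boundary: `d_Ω(x) = inf {|x - y| : y ∈ ∂Ω}`. -/
noncomputable def distB {N : ℕ} (Ω : Set (EuclideanSpace ℝ (Fin N)))
    (x : EuclideanSpace ℝ (Fin N)) : ℝ :=
  Metric.infDist x (frontier Ω)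

/-- Inradius: `r_Ω = sup_{x ∈ Ω} d_Ω(x)`. -/
noncomputable def inradius {N : ℕ} (Ω : Set (EuclideanSpace ℝ (Fin N))) : ℝ :=
  sSup (distB Ω '' Ω)

/-- Generalized principal frequency
`λ_{p,q}(Ω) = inf {∫_Ω |∇ψ|^p : ψ ∈ C_c^∞(Ω), ∫_Ω |ψ|^q = 1}`. -/
noncomputable def lam (N : ℕ) (p q : ℝ) (Ω : Set (EuclideanSpace ℝ (Fin N))) : ℝ :=
  sInf { e : ℝ | ∃ ψ : EuclideanSpace ℝ (Fin N) → ℝ,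
    ContDiff ℝ (⊤ : ℕ∞) ψ ∧ HasCompactSupport ψ ∧ tsupport ψ ⊆ Ω ∧
    (∫ x in Ω, |ψ x| ^ q) = 1 ∧ e = ∫ x in Ω, ‖fderiv ℝ ψ x‖ ^ p }

/-- One-dimensional Poincaré constant
`π_{p,q} = inf {‖u'‖_{L^p((0,1))} : u ∈ C_c^∞((0,1)), ‖u‖_{L^q((0,1))} = 1}`. -/
noncomputable def pipq (p q : ℝ) : ℝ :=
  sInf { e : ℝ | ∃ u : ℝ → ℝ, ContDiff ℝ (⊤ : ℕ∞) u ∧ HasCompactSupport u ∧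
    tsupport u ⊆ Set.Ioo (0:ℝ) 1 ∧
    (∫ t in Set.Ioo (0:ℝ) 1, |u t| ^ q) ^ (1/q) = 1 ∧
    e = (∫ t in Set.Ioo (0:ℝ) 1, |deriv u t| ^ p) ^ (1/p) }

/-- The Makai constant `C_{p,q} = (π_{p,q}/2)^p ((p-q)/(pq+p-q))^{(p-q)/q}`. -/
noncomputable def makaiC (p q : ℝ) : ℝ :=
  (pipq p q / 2) ^ p * ((p - q) / (p * q + p - q)) ^ ((p - q) / q)


section AuxProofs

open MeasureTheory Set Metric Module
open scoped RealInnerProductSpace ENNReal NNReal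

open MeasureTheory Set Metric

-- crossing lemma
lemma exists_frontier_cross {E : Type*} [NormedAddCommGroup E] [NormedSpace ℝ E] {Ω : Set E}
    (hopen : IsOpen Ω) {x y : E} (hx : x ∈ Ω) (hy : y ∉ Ω) :
    ∃ q ∈ frontier Ω, dist x q ≤ dist x y ∧ dist y q ≤ dist x y := by
  set f : ℝ → E := fun t => x + t • (y - x) with hf
  have hfc : Continuous f := by fun_prop
  set S : Set ℝ := Set.Icc 0 1 ∩ f ⁻¹' Ωᶜ with hS
  have hSc : IsClosed S := isClosed_Icc.inter (hopen.isClosed_compl.preimage hfc)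
  have h1S : (1:ℝ) ∈ S := ⟨⟨zero_le_one, le_refl 1⟩, by simp [hf, hy]⟩
  have hSne : S.Nonempty := ⟨1, h1S⟩
  have hSbd : BddBelow S := ⟨0, fun t ht => ht.1.1⟩
  set τ := sInf S with hτ
  have hτS : τ ∈ S := hSc.csInf_mem hSne hSbd
  have hτ0 : 0 ≤ τ := le_csInf hSne (fun t ht => ht.1.1)
  have hτ1 : τ ≤ 1 := csInf_le hSbd h1S
  have hq1 : f τ ∈ closure Ωᶜ := subset_closure hτS.2
  have hτpos : 0 < τ := by
    rcases eq_or_lt_of_le hτ0 with h | h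
    · exfalso
      have h2 := hτS.2
      rw [← h] at h2
      simp only [Set.mem_preimage, Set.mem_compl_iff, hf] at h2
      simp only [zero_smul, add_zero] at h2
      exact h2 hx
    · exact h
  have hq2 : f τ ∈ closure Ω := by
    have hsub : f '' (Set.Ico 0 τ) ⊆ Ω := by
      rintro _ ⟨t, ⟨ht0, htτ⟩, rfl⟩
      by_contra hc
      exact absurd (csInf_le hSbd ⟨⟨ht0, htτ.le.trans hτ1⟩, hc⟩) (not_le.mpr htτ)
    have hmem : f τ ∈ f '' closure (Set.Ico 0 τ) := by
      refine ⟨τ, ?_, rfl⟩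
      rw [closure_Ico hτpos.ne]
      exact ⟨hτ0, le_refl _⟩
    have := image_closure_subset_closure_image (s := Set.Ico 0 τ) hfc hmem
    exact closure_mono hsub this
  refine ⟨f τ, ?_, ?_, ?_⟩
  · rw [frontier_eq_closure_inter_closure]; exact ⟨hq2, hq1⟩
  · have : x - f τ = (-τ) • (y - x) := by simp only [hf]; module
    rw [dist_eq_norm, this, norm_smul, dist_eq_norm']
    simp only [norm_neg, Real.norm_eq_abs, abs_of_nonneg hτ0]
    nlinarith [norm_nonneg (y - x)]
  · have : y - f τ = (1 - τ) • (y - x) := by simp only [hf]; module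
    rw [dist_eq_norm, this, norm_smul, dist_eq_norm']
    simp only [Real.norm_eq_abs, abs_of_nonneg (by linarith : (0:ℝ) ≤ 1 - τ)]
    nlinarith [norm_nonneg (y - x)]




lemma volume_le_of_expansive {N : ℕ} {s t : Set (EuclideanSpace ℝ (Fin N))}
    {Φ : EuclideanSpace ℝ (Fin N) → EuclideanSpace ℝ (Fin N)}
    (hmaps : Set.MapsTo Φ s t)
    (hexp : ∀ x ∈ s, ∀ y ∈ s, dist x y ≤ dist (Φ x) (Φ y)) :
    volume s ≤ volume t := by
  set n : ℕ := finrank ℝ (EuclideanSpace ℝ (Fin N)) with hn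
  set μ : Measure (EuclideanSpace ℝ (Fin N)) := μH[(n : ℝ)] with hμ
  have hvol : (volume : Measure (EuclideanSpace ℝ (Fin N))) = Measure.addHaarScalarFactor volume μ • μ := by
    exact MeasureTheory.Measure.isAddLeftInvariant_eq_smul volume μ
  have key : μ s ≤ μ t := by
    set g := Function.invFunOn Φ s with hg
    have hgmem : ∀ p ∈ Φ '' s, g p ∈ s ∧ Φ (g p) = p := by
      rintro p ⟨a, ha, rfl⟩
      exact ⟨Function.invFunOn_mem ⟨a, ha, rfl⟩, Function.invFunOn_eq ⟨a, ha, rfl⟩⟩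
    have hglip : LipschitzOnWith 1 g (Φ '' s) := by
      rw [lipschitzOnWith_iff_dist_le_mul]
      intro p hp q hq
      obtain ⟨hps, hpe⟩ := hgmem p hp
      obtain ⟨hqs, hqe⟩ := hgmem q hq
      have := hexp _ hps _ hqs
      rw [hpe, hqe] at this
      simpa using this
    have himg : g '' (Φ '' s) = s := by
      apply Set.Subset.antisymm
      · rintro _ ⟨p, hp, rfl⟩; exact (hgmem p hp).1
      · intro a ha
        refine ⟨Φ a, ⟨a, ha, rfl⟩, ?_⟩
        obtain ⟨hgs, hge⟩ := hgmem (Φ a) ⟨a, ha, rfl⟩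
        have hd : dist (g (Φ a)) a ≤ dist (Φ (g (Φ a))) (Φ a) := hexp _ hgs _ ha
        rw [hge] at hd
        simp only [dist_self] at hd
        exact (dist_le_zero.mp hd)
    calc μ s = μ (g '' (Φ '' s)) := by rw [himg]
    _ ≤ (1:ℝ≥0) ^ (n:ℝ) * μ (Φ '' s) := hglip.hausdorffMeasure_image_le (by positivity)
    _ ≤ μ t := by
        simp only [ENNReal.coe_one, ENNReal.one_rpow, one_mul]
        exact measure_mono (Set.image_subset_iff.mpr hmaps)
  rw [hvol]
  simp only [Measure.smul_apply, ENNReal.smul_def, smul_eq_mul]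
  exact mul_le_mul_right key _




variable {E : Type*} [NormedAddCommGroup E] [InnerProductSpace ℝ E] [CompleteSpace E]

lemma ball_subset_of_open {Ω : Set E} (hopen : IsOpen Ω) {x : E} (hx : x ∈ Ω) :
    Metric.ball x (Metric.infDist x (frontier Ω)) ⊆ Ω := by
  intro y hy
  by_contra hc
  obtain ⟨q, hq, hxq, -⟩ := exists_frontier_cross hopen hx hc
  have h1 : Metric.infDist x (frontier Ω) ≤ dist x q := Metric.infDist_le_dist_of_mem hq
  rw [Metric.mem_ball] at hy
  rw [dist_comm] at hy
  linarith

lemma support_lt {Ω : Set E} (hconv : Convex ℝ Ω) (hopen : IsOpen Ω) {x z : E}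
    (hx : x ∈ Ω) (hz : z ∈ frontier Ω)
    (hdist : Metric.infDist x (frontier Ω) = dist x z)
    (hdpos : 0 < Metric.infDist x (frontier Ω)) :
    ∀ w ∈ Ω, ⟪(Metric.infDist x (frontier Ω))⁻¹ • (z - x), w - x⟫ <
      Metric.infDist x (frontier Ω) := by
  set d := Metric.infDist x (frontier Ω) with hd
  set u : E := d⁻¹ • (z - x) with hu
  have hzx : z - x ≠ 0 := by
    intro h
    rw [sub_eq_zero] at h
    rw [h] at hdist
    simp at hdist
    exact hdpos.ne' hdist
  have hnorm_zx : ‖z - x‖ = d := by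
    rw [hdist, dist_eq_norm, norm_sub_rev]
  have hunorm : ‖u‖ = 1 := by
    rw [hu, norm_smul, hnorm_zx, Real.norm_eq_abs, abs_of_pos (inv_pos.mpr hdpos)]
    field_simp
  have hzu : z = x + d • u := by
    rw [hu, smul_smul, mul_inv_cancel₀ hdpos.ne', one_smul]
    abel
  have hzΩ : z ∉ Ω := fun h => (Set.disjoint_left.mp
    ((disjoint_frontier_iff_isOpen).mpr hopen) hz) h
  obtain ⟨f, hf⟩ := geometric_hahn_banach_open_point hconv hopen hzΩ
  set v : E := (InnerProductSpace.toDual ℝ E).symm f with hv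
  have hvy : ∀ y : E, ⟪v, y⟫ = f y := fun y => InnerProductSpace.toDual_symm_apply
  have hAB : ∀ w ∈ Ω, ⟪v, w⟫ < ⟪v, z⟫ := by
    intro w hw; rw [hvy, hvy]; exact hf w hw
  have hvne : v ≠ 0 := by
    intro h
    have := hAB x hx
    rw [h] at this
    simp at this
  have hvpos : 0 < ‖v‖ := norm_pos_iff.mpr hvne
  -- points x + s • (normalized v) are in Ω for 0 ≤ s < d
  have hball := ball_subset_of_open hopen hx
  have hs_mem : ∀ s : ℝ, 0 ≤ s → s < d → x + s • (‖v‖⁻¹ • v) ∈ Ω := by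
    intro s hs0 hsd
    apply hball
    rw [Metric.mem_ball, dist_eq_norm]
    simp only [add_sub_cancel_left]
    rw [norm_smul, norm_smul, Real.norm_eq_abs, Real.norm_eq_abs,
      abs_of_nonneg hs0, abs_of_nonneg (inv_nonneg.mpr hvpos.le)]
    rw [inv_mul_cancel₀ hvpos.ne']
    simpa using hsd
  have hstep : ∀ s : ℝ, 0 ≤ s → s < d → ⟪v, x⟫ + s * ‖v‖ < ⟪v, z⟫ := by
    intro s hs0 hsd
    have := hAB _ (hs_mem s hs0 hsd)
    rw [inner_add_right, real_inner_smul_right, real_inner_smul_right,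
      real_inner_self_eq_norm_sq] at this
    have hrw : s * (‖v‖⁻¹ * ‖v‖ ^ 2) = s * ‖v‖ := by
      field_simp
    rw [hrw] at this
    exact this
  have hlimit : ⟪v, x⟫ + d * ‖v‖ ≤ ⟪v, z⟫ := by
    by_contra hcon
    push_neg at hcon
    set A := ⟪v, x⟫
    set B := ⟪v, z⟫
    have h0 : A < B := by
      have := hstep 0 le_rfl hdpos
      simpa using this
    set ε := (A + d * ‖v‖ - B) / (2 * ‖v‖) with hε
    have hεpos : 0 < ε := by
      apply div_pos
      · linarith
      · linarith
    have hεd : ε < d := by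
      rw [hε, div_lt_iff₀ (by linarith : (0:ℝ) < 2 * ‖v‖)]
      nlinarith
    have := hstep (d - ε) (by linarith) (by linarith)
    rw [hε] at this
    have h2 : (d - (A + d * ‖v‖ - B) / (2 * ‖v‖)) * ‖v‖
        = d * ‖v‖ - (A + d * ‖v‖ - B) / 2 := by
      field_simp
    rw [h2] at this
    linarith
  have hvu : ‖v‖ ≤ ⟪v, u⟫ := by
    have : ⟪v, z⟫ = ⟪v, x⟫ + d * ⟪v, u⟫ := by
      rw [hzu, inner_add_right, real_inner_smul_right]
    rw [this] at hlimit
    have := (mul_le_mul_iff_right₀ hdpos).mp (by linarith : d * ‖v‖ ≤ d * ⟪v, u⟫)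
    exact this
  have hveq : v = ‖v‖ • u := by
    have hexp : ‖v - ‖v‖ • u‖ ^ 2 ≤ 0 := by
      rw [norm_sub_sq_real]
      rw [real_inner_smul_right, norm_smul, Real.norm_eq_abs, abs_of_nonneg hvpos.le,
        hunorm, mul_one]
      nlinarith
    have := sq_nonneg ‖v - ‖v‖ • u‖
    have hz2 : ‖v - ‖v‖ • u‖ ^ 2 = 0 := le_antisymm hexp this
    have : ‖v - ‖v‖ • u‖ = 0 := by
      nlinarith [norm_nonneg (v - ‖v‖ • u)]
    rw [norm_eq_zero, sub_eq_zero] at this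
    exact this
  intro w hw
  have h1 : ⟪v, w⟫ < ⟪v, z⟫ := hAB w hw
  have hlw : ⟪v, w⟫ = ‖v‖ * ⟪u, w⟫ := by
    nth_rewrite 1 [hveq]; exact real_inner_smul_left u w ‖v‖
  have hlz : ⟪v, z⟫ = ‖v‖ * ⟪u, z⟫ := by
    nth_rewrite 1 [hveq]; exact real_inner_smul_left u z ‖v‖
  rw [hlw, hlz] at h1
  have h2 : ⟪u, w⟫ < ⟪u, z⟫ := (mul_lt_mul_iff_right₀ hvpos).mp h1
  have h3 : ⟪u, z⟫ = ⟪u, x⟫ + d := by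
    rw [hzu, inner_add_right, real_inner_smul_right, real_inner_self_eq_norm_sq, hunorm]
    ring
  rw [inner_sub_right]
  linarith

lemma supergrad {Ω : Set E} (hconv : Convex ℝ Ω) (hopen : IsOpen Ω) {x z : E}
    (hx : x ∈ Ω) (hz : z ∈ frontier Ω)
    (hdist : Metric.infDist x (frontier Ω) = dist x z)
    (hdpos : 0 < Metric.infDist x (frontier Ω)) :
    ∀ y ∈ Ω, Metric.infDist y (frontier Ω) ≤ Metric.infDist x (frontier Ω) -
      ⟪(Metric.infDist x (frontier Ω))⁻¹ • (z - x), y - x⟫ := by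
  set d := Metric.infDist x (frontier Ω) with hd
  set u : E := d⁻¹ • (z - x) with hu
  have hnorm_zx : ‖z - x‖ = d := by rw [hdist, dist_eq_norm, norm_sub_rev]
  have hunorm : ‖u‖ = 1 := by
    rw [hu, norm_smul, hnorm_zx, Real.norm_eq_abs, abs_of_pos (inv_pos.mpr hdpos)]
    field_simp
  intro y hy
  set δ := d - ⟪u, y - x⟫ with hδ
  have hδpos : 0 < δ := by
    have := support_lt hconv hopen hx hz hdist hdpos y hy
    rw [hδ]; linarith
  set p := y + δ • u with hp
  have hpΩ : p ∉ Ω := by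
    intro hpmem
    have := support_lt hconv hopen hx hz hdist hdpos p hpmem
    have hcalc : ⟪u, p - x⟫ = ⟪u, y - x⟫ + δ := by
      have : p - x = (y - x) + δ • u := by rw [hp]; abel
      rw [this, inner_add_right, real_inner_smul_right, real_inner_self_eq_norm_sq, hunorm]
      ring
    rw [hcalc] at this
    rw [hδ] at this
    linarith
  obtain ⟨q, hq, hyq, -⟩ := exists_frontier_cross hopen hy hpΩ
  have h1 : Metric.infDist y (frontier Ω) ≤ dist y q := Metric.infDist_le_dist_of_mem hq
  have h2 : dist y p = δ := by
    rw [dist_eq_norm']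
    simp only [hp, add_sub_cancel_left]
    rw [norm_smul, Real.norm_eq_abs, abs_of_pos hδpos, hunorm, mul_one]
  rw [hδ] at h2
  linarith

lemma rpow_step {a b α : ℝ} (hα : 0 < α) (h0 : 0 ≤ a) (hab : a ≤ b) :
    a ^ α * (b - a) * (α + 1) ≤ b ^ (α + 1) - a ^ (α + 1) := by
  have h1 : ∫ t in a..b, t ^ α = (b ^ (α + 1) - a ^ (α + 1)) / (α + 1) :=
    integral_rpow (Or.inl (by linarith))
  have hmono : ∫ t in a..b, (a : ℝ) ^ α ≤ ∫ t in a..b, t ^ α := by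
    apply intervalIntegral.integral_mono_on hab intervalIntegrable_const
      (intervalIntegral.intervalIntegrable_rpow' (by linarith))
    intro t ht
    exact Real.rpow_le_rpow h0 ht.1 hα.le
  rw [intervalIntegral.integral_const, h1] at hmono
  rw [smul_eq_mul] at hmono
  have hα1 : (0:ℝ) < α + 1 := by linarith
  calc a ^ α * (b - a) * (α + 1) = ((b - a) * a ^ α) * (α + 1) := by ring
  _ ≤ ((b ^ (α + 1) - a ^ (α + 1)) / (α + 1)) * (α + 1) := by
      apply mul_le_mul_of_nonneg_right hmono hα1.le
  _ = b ^ (α + 1) - a ^ (α + 1) := by field_simp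

set_option maxHeartbeats 2000000 in
theorem stmt_4 (N : ℕ) (Ω : Set (EuclideanSpace ℝ (Fin N))) (hne : Ω.Nonempty)
    (hΩ : Ω ≠ Set.univ) (hconv : Convex ℝ Ω) (hbd : Bornology.IsBounded Ω)
    (hopen : IsOpen Ω) (α : ℝ) (hα : 0 < α) :
    (∫ x in Ω, distB Ω x ^ α) ≤ (volume Ω).toReal * inradius Ω ^ α / (α + 1) := by
  classical
  set F := frontier Ω with hF
  have hFne : F.Nonempty := nonempty_frontier_iff.mpr ⟨hne, hΩ⟩
  have hFcl : IsClosed F := isClosed_frontier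
  have hFcp : IsCompact F := by
    apply Metric.isCompact_of_isClosed_isBounded hFcl
    exact hbd.closure.subset frontier_subset_closure
  choose z hzF hzdist using fun x : EuclideanSpace ℝ (Fin N) => hFcp.exists_infDist_eq_dist hFne x
  set dd : EuclideanSpace ℝ (Fin N) → ℝ := fun x => Metric.infDist x F with hdd
  have hddist : ∀ x, distB Ω x = dd x := fun x => rfl
  have hdpos : ∀ x ∈ Ω, 0 < dd x := by
    intro x hx
    have hxF : x ∉ F := fun h =>
      (Set.disjoint_left.mp ((disjoint_frontier_iff_isOpen).mpr hopen) h) hx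
    exact (hFcl.notMem_iff_infDist_pos hFne).mp hxF
  set u : EuclideanSpace ℝ (Fin N) → EuclideanSpace ℝ (Fin N) := fun x => (dd x)⁻¹ • (z x - x) with hu
  have hugrad : ∀ x ∈ Ω, ∀ y ∈ Ω, dd y ≤ dd x - ⟪u x, y - x⟫ := by
    intro x hx y hy
    exact supergrad hconv hopen hx (hzF x) (hzdist x) (hdpos x hx) y hy
  have hunorm : ∀ x ∈ Ω, ‖u x‖ = 1 := by
    intro x hx
    have h1 : ‖z x - x‖ = dd x := by
      simp only [hdd]
      rw [hzdist x, dist_eq_norm, norm_sub_rev]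
    simp only [hu]
    rw [norm_smul, h1, Real.norm_eq_abs, abs_of_pos (inv_pos.mpr (hdpos x hx))]
    exact inv_mul_cancel₀ (hdpos x hx).ne'
  -- expansiveness
  have hexp : ∀ c : ℝ, 0 ≤ c → ∀ x ∈ Ω, ∀ y ∈ Ω,
      dist x y ≤ dist (x + c • u x) (y + c • u y) := by
    intro c hc x hx y hy
    have hinner : 0 ≤ ⟪u x - u y, x - y⟫ := by
      have h1 := hugrad x hx y hy
      have h2 := hugrad y hy x hx
      have e1 : ⟪u x, y - x⟫ = -⟪u x, x - y⟫ := by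
        rw [← inner_neg_right]; congr 1; abel
      have e2 : ⟪u y, x - y⟫ = ⟪u y, x - y⟫ := rfl
      rw [inner_sub_left]
      rw [e1] at h1
      linarith
    set w := (x + c • u x) - (y + c • u y) with hw
    have hweq : w = (x - y) + c • (u x - u y) := by rw [hw, smul_sub]; abel
    have hinner2 : ‖x - y‖ ^ 2 ≤ ⟪w, x - y⟫ := by
      rw [hweq, inner_add_left, real_inner_smul_left, real_inner_self_eq_norm_sq]
      nlinarith
    have hcs : ⟪w, x - y⟫ ≤ ‖w‖ * ‖x - y‖ := real_inner_le_norm w (x - y)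
    rw [dist_eq_norm, dist_eq_norm]
    have hnw : x + c • u x - (y + c • u y) = w := by rw [hw]
    rw [hnw]
    rcases eq_or_lt_of_le (norm_nonneg (x - y)) with h0 | h0
    · rw [← h0]; exact norm_nonneg w
    · nlinarith
  -- ray property
  have hray : ∀ x ∈ Ω, ∀ c : ℝ, 0 ≤ c → c < dd x →
      (x + c • u x ∈ Ω ∧ dd (x + c • u x) = dd x - c) := by
    intro x hx c hc0 hcd
    have hdx := hdpos x hx
    have hzeq : z x = x + dd x • u x := by
      simp only [hu]
      rw [smul_smul, mul_inv_cancel₀ hdx.ne', one_smul]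
      abel
    have hdist_c : dist (x + c • u x) x = c := by
      rw [dist_eq_norm]
      simp only [add_sub_cancel_left]
      rw [norm_smul, Real.norm_eq_abs, abs_of_nonneg hc0, hunorm x hx, mul_one]
    have hmem : x + c • u x ∈ Ω := by
      apply ball_subset_of_open hopen hx
      rw [Metric.mem_ball, hdist_c]
      exact hcd
    refine ⟨hmem, le_antisymm ?_ ?_⟩
    · have : dist (x + c • u x) (z x) = dd x - c := by
        rw [hzeq, dist_eq_norm]
        have : x + c • u x - (x + dd x • u x) = (c - dd x) • u x := by
          rw [sub_smul]; abel
        rw [this, norm_smul, Real.norm_eq_abs, abs_of_nonpos (by linarith), hunorm x hx]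
        ring
      calc dd (x + c • u x) ≤ dist (x + c • u x) (z x) :=
            Metric.infDist_le_dist_of_mem (hzF x)
      _ = dd x - c := this
    · have h1 : dd x ≤ dd (x + c • u x) + dist x (x + c • u x) :=
        Metric.infDist_le_infDist_add_dist
      rw [dist_comm, hdist_c] at h1
      linarith
  -- inradius facts
  set r := inradius Ω with hr
  have hbdd : BddAbove (distB Ω '' Ω) := by
    obtain ⟨q, hq⟩ := hFne
    obtain ⟨R, hR0, hsub⟩ := hbd.subset_closedBall_lt 0 0
    refine ⟨R + dist 0 q, ?_⟩
    rintro _ ⟨x, hx, rfl⟩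
    have h1 : distB Ω x ≤ dist x q := Metric.infDist_le_dist_of_mem hq
    have h2 : dist x 0 ≤ R := by
      have := hsub hx
      simpa [Metric.mem_closedBall] using this
    calc distB Ω x ≤ dist x q := h1
    _ ≤ dist x 0 + dist 0 q := dist_triangle x 0 q
    _ ≤ R + dist 0 q := by linarith
  have hdler : ∀ x ∈ Ω, dd x ≤ r := by
    intro x hx
    exact le_csSup hbdd ⟨x, hx, rfl⟩
  have hrpos : 0 < r := by
    obtain ⟨x, hx⟩ := hne
    exact lt_of_lt_of_le (hdpos x hx) (hdler x hx)
  have hVfin : volume Ω ≠ ⊤ := (hbd.measure_lt_top).ne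
  set V := (volume Ω).toReal with hV
  have hVnn : 0 ≤ V := ENNReal.toReal_nonneg
  -- continuity and integrability
  have hfc : Continuous fun x : EuclideanSpace ℝ (Fin N) => dd x ^ α :=
    (Metric.continuous_infDist_pt F).rpow_const (fun x => Or.inr hα.le)
  have hintΩ : IntegrableOn (fun x : EuclideanSpace ℝ (Fin N) => dd x ^ α) Ω volume := by
    apply Measure.integrableOn_of_bounded hVfin hfc.aestronglyMeasurable
    filter_upwards [ae_restrict_mem hopen.measurableSet] with x hx
    rw [Real.norm_eq_abs, abs_of_nonneg (Real.rpow_nonneg Metric.infDist_nonneg α)]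
    exact Real.rpow_le_rpow Metric.infDist_nonneg (hdler x hx) hα.le
  -- MAIN estimate for each m ≥ 1
  have hmain : ∀ m : ℕ, 1 ≤ m →
      (∫ x in Ω, distB Ω x ^ α) ≤
        (V * r ^ α / (α + 1)) * ((m + 1 : ℝ) / m) ^ (α + 1) := by
    intro m hm
    have hmpos : (0:ℝ) < m := by exact_mod_cast hm
    set h : ℝ := r / m with hh
    have hhpos : 0 < h := div_pos hrpos hmpos
    set C : ℕ → Set (EuclideanSpace ℝ (Fin N)) := fun k => {x | x ∈ Ω ∧ k * h < dd x ∧ dd x ≤ (k + 1) * h} with hC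
    have hCsub : ∀ k, C k ⊆ Ω := fun k x hx => hx.1
    have hCmeas : ∀ k, MeasurableSet (C k) := by
      intro k
      have : C k = Ω ∩ dd ⁻¹' (Set.Ioc (k * h) ((k + 1) * h)) := by
        ext x
        simp only [hC, Set.mem_setOf_eq, Set.mem_inter_iff, Set.mem_preimage, Set.mem_Ioc]
      rw [this]
      exact hopen.measurableSet.inter
        ((Metric.continuous_infDist_pt F).measurable measurableSet_Ioc)
    have hcover : Ω = ⋃ k ∈ Finset.range m, C k := by
      apply Set.Subset.antisymm
      · intro x hx
        have hd0 := hdpos x hx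
        have hdr := hdler x hx
        set j := ⌈dd x / h⌉₊ with hj
        have hj1 : 1 ≤ j := Nat.one_le_ceil_iff.mpr (div_pos hd0 hhpos)
        have hjm : j ≤ m := Nat.ceil_le.mpr (by
          rw [div_le_iff₀ hhpos]
          calc dd x ≤ r := hdr
          _ = m * h := by rw [hh]; field_simp)
        have hupper : dd x ≤ j * h := by
          have := Nat.le_ceil (dd x / h)
          rw [← hj] at this
          calc dd x = (dd x / h) * h := by field_simp
          _ ≤ j * h := by nlinarith [Nat.le_ceil (dd x / h)]
        have hlower : ((j : ℝ) - 1) * h < dd x := by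
          by_contra hcon
          push_neg at hcon
          have hle : dd x / h ≤ (j - 1 : ℕ) := by
            rw [div_le_iff₀ hhpos]
            have : ((j - 1 : ℕ) : ℝ) = (j : ℝ) - 1 := by
              have : (1:ℕ) ≤ j := hj1
              push_cast [Nat.cast_sub this]
              ring
            rw [this]
            linarith
          have := Nat.ceil_le.mpr hle
          rw [← hj] at this
          omega
        have hkmem : (j - 1 : ℕ) ∈ Finset.range m := Finset.mem_range.mpr (by omega)
        have hcast : ((j - 1 : ℕ) : ℝ) = (j : ℝ) - 1 := by
          push_cast [Nat.cast_sub hj1]; ring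
        have hc1 : ((j - 1 : ℕ) : ℝ) * h < dd x := by rw [hcast]; exact hlower
        have hc2 : dd x ≤ (((j - 1 : ℕ) : ℝ) + 1) * h := by
          rw [hcast]
          have hjj : (j : ℝ) - 1 + 1 = (j : ℝ) := by ring
          rw [hjj]
          exact hupper
        exact Set.mem_iUnion₂.mpr ⟨j - 1, hkmem, hx, hc1, hc2⟩
      · exact Set.iUnion₂_subset fun k _ => hCsub k
    have hdisj : Set.Pairwise (↑(Finset.range m)) (Function.onFun Disjoint C) := by
      have key : ∀ i j : ℕ, i < j → Disjoint (C i) (C j) := by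
        intro i j hlt
        rw [Set.disjoint_left]
        rintro x ⟨-, -, hxu⟩ ⟨-, hxl, -⟩
        have hle : ((i : ℝ) + 1) ≤ (j : ℝ) := by exact_mod_cast hlt
        nlinarith [hhpos]
      intro i _ j _ hij
      rcases lt_or_gt_of_ne hij with hlt | hlt
      · exact key i j hlt
      · exact (key j i hlt).symm
    -- collar volumes
    have hvmono : ∀ j k : ℕ, j ≤ k → volume (C k) ≤ volume (C j) := by
      intro j k hjk
      set c : ℝ := ((k : ℝ) - j) * h with hc
      have hc0 : 0 ≤ c := by
        have : (j:ℝ) ≤ k := by exact_mod_cast hjk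
        nlinarith
      apply volume_le_of_expansive (Φ := fun x => x + c • u x)
      · intro x hx
        obtain ⟨hxΩ, hxl, hxu⟩ := hx
        have hckh : c ≤ (k:ℝ) * h := by
          have : (0:ℝ) ≤ j := by positivity
          nlinarith
        have hcd : c < dd x := lt_of_le_of_lt hckh hxl
        obtain ⟨hmem, hdval⟩ := hray x hxΩ c hc0 hcd
        refine ⟨hmem, ?_, ?_⟩
        · rw [hdval, hc]; linarith
        · rw [hdval, hc]; linarith
      · intro x hx y hy
        exact hexp c hc0 x (hCsub k hx) y (hCsub k hy)
    have hCfin : ∀ k, volume (C k) ≠ ⊤ := fun k =>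
      (lt_of_le_of_lt (measure_mono (hCsub k)) hbd.measure_lt_top).ne
    set a : ℕ → ℝ := fun k => (volume (C k)).toReal with ha
    have hann : ∀ k, 0 ≤ a k := fun k => ENNReal.toReal_nonneg
    have hamono : ∀ j k : ℕ, j ≤ k → a k ≤ a j := by
      intro j k hjk
      exact ENNReal.toReal_le_toReal (hCfin k) (hCfin j) |>.mpr (hvmono j k hjk)
    have haV : ∑ k ∈ Finset.range m, a k = V := by
      have h1 : volume Ω = ∑ k ∈ Finset.range m, volume (C k) := by
        rw [hcover]
        exact measure_biUnion_finset hdisj (fun k _ => hCmeas k)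
      rw [hV, h1, ENNReal.toReal_sum (fun k _ => hCfin k)]
    -- split the integral
    have hsplit : ∫ x in Ω, dd x ^ α = ∑ k ∈ Finset.range m, ∫ x in C k, dd x ^ α := by
      conv_lhs => rw [hcover]
      exact integral_biUnion_finset (Finset.range m) (fun k _ => hCmeas k) hdisj
        (fun k _ => hintΩ.mono_set (hCsub k))
    set w : ℕ → ℝ := fun k => (((k : ℝ) + 1) * h) ^ α with hwdef
    have hwnn : ∀ k, 0 ≤ w k := by
      intro k
      apply Real.rpow_nonneg
      positivity
    have hbound : ∀ k, ∫ x in C k, dd x ^ α ≤ w k * a k := by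
      intro k
      have hnorm := norm_setIntegral_le_of_norm_le_const (μ := volume)
        (lt_of_le_of_lt (measure_mono (hCsub k)) hbd.measure_lt_top)
        (C := w k) (f := fun x => dd x ^ α) ?_
      · calc ∫ x in C k, dd x ^ α ≤ ‖∫ x in C k, dd x ^ α‖ := le_abs_self _
        _ ≤ w k * a k := hnorm
      · intro x hx
        rw [Real.norm_eq_abs, abs_of_nonneg (Real.rpow_nonneg Metric.infDist_nonneg α)]
        exact Real.rpow_le_rpow Metric.infDist_nonneg hx.2.2 hα.le
    -- Chebyshev
    have hanti : AntivaryOn w a (↑(Finset.range m)) := by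
      intro i _ j _ hij
      by_contra hcon
      push_neg at hcon
      have hji : ¬ (i ≤ j) := by
        intro hle
        exact absurd (hamono i j hle) (not_le.mpr hij)
      push_neg at hji
      have : w j ≤ w i := by
        apply Real.rpow_le_rpow (by positivity) ?_ hα.le
        have : (j:ℝ) ≤ i := by exact_mod_cast hji.le
        nlinarith
      exact absurd this (not_le.mpr hcon)
    have hcheb : (m : ℝ) * ∑ k ∈ Finset.range m, w k * a k ≤
        (∑ k ∈ Finset.range m, w k) * ∑ k ∈ Finset.range m, a k := by
      have := hanti.card_mul_sum_le_sum_mul_sum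
      simpa using this
    -- weight sum bound
    have hwsum : ∑ k ∈ Finset.range m, w k ≤ (((m : ℝ) + 1) * h) ^ (α + 1) / (h * (α + 1)) := by
      have hper : ∀ k : ℕ, w k * (h * (α + 1)) ≤
          ((((k:ℝ) + 1) + 1) * h) ^ (α + 1) - (((k:ℝ) + 1) * h) ^ (α + 1) := by
        intro k
        have := rpow_step (a := ((k:ℝ) + 1) * h) (b := (((k:ℝ) + 1) + 1) * h) hα
          (by positivity) (by nlinarith)
        have hba : ((((k:ℝ) + 1) + 1) * h) - (((k:ℝ) + 1) * h) = h := by ring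
        rw [hba] at this
        simp only [hwdef]
        nlinarith [this]
      have hsum : (∑ k ∈ Finset.range m, w k) * (h * (α + 1)) ≤
          (((m:ℝ) + 1) * h) ^ (α + 1) - ((0 + 1 : ℝ) * h) ^ (α + 1) := by
        rw [Finset.sum_mul]
        calc ∑ k ∈ Finset.range m, w k * (h * (α + 1))
            ≤ ∑ k ∈ Finset.range m, (((((k:ℝ) + 1) + 1) * h) ^ (α + 1)
              - (((k:ℝ) + 1) * h) ^ (α + 1)) := Finset.sum_le_sum (fun k _ => hper k)
        _ = (((m:ℝ) + 1) * h) ^ (α + 1) - ((0 + 1 : ℝ) * h) ^ (α + 1) := by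
            have := Finset.sum_range_sub (f := fun k => (((k:ℝ) + 1) * h) ^ (α + 1)) m
            push_cast at this ⊢
            convert this using 2 <;> push_cast <;> ring_nf
      have hrpow_nn : (0:ℝ) ≤ ((0 + 1 : ℝ) * h) ^ (α + 1) := Real.rpow_nonneg (by linarith) _
      have hpos : 0 < h * (α + 1) := by positivity
      rw [le_div_iff₀ hpos]
      linarith
    -- combine
    have hwsum_nn : 0 ≤ ∑ k ∈ Finset.range m, w k := Finset.sum_nonneg (fun k _ => hwnn k)
    have hcomb : ∫ x in Ω, dd x ^ α ≤
        ((((m:ℝ) + 1) * h) ^ (α + 1) / (h * (α + 1))) * V / m := by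
      calc ∫ x in Ω, dd x ^ α = ∑ k ∈ Finset.range m, ∫ x in C k, dd x ^ α := hsplit
      _ ≤ ∑ k ∈ Finset.range m, w k * a k := Finset.sum_le_sum (fun k _ => hbound k)
      _ ≤ ((∑ k ∈ Finset.range m, w k) * ∑ k ∈ Finset.range m, a k) / m := by
          rw [le_div_iff₀ hmpos]
          linarith [hcheb]
      _ ≤ ((((m:ℝ) + 1) * h) ^ (α + 1) / (h * (α + 1))) * V / m := by
          rw [haV]
          exact (div_le_div_iff_of_pos_right hmpos).mpr (mul_le_mul_of_nonneg_right hwsum hVnn)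
    -- simplify the bound
    have hsimp : ((((m:ℝ) + 1) * h) ^ (α + 1) / (h * (α + 1))) * V / m =
        (V * r ^ α / (α + 1)) * ((m + 1 : ℝ) / m) ^ (α + 1) := by
      have h1 : ((m:ℝ) + 1) * h = r * ((m + 1 : ℝ) / m) := by
        rw [hh]; field_simp
      rw [h1, Real.mul_rpow hrpos.le (by positivity)]
      have h2 : r ^ (α + 1) = r ^ α * r := by
        rw [Real.rpow_add hrpos, Real.rpow_one]
      rw [h2, hh]
      field_simp
    calc (∫ x in Ω, distB Ω x ^ α) = ∫ x in Ω, dd x ^ α := rfl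
    _ ≤ ((((m:ℝ) + 1) * h) ^ (α + 1) / (h * (α + 1))) * V / m := hcomb
    _ = (V * r ^ α / (α + 1)) * ((m + 1 : ℝ) / m) ^ (α + 1) := hsimp
  -- take the limit m → ∞
  have htend : Filter.Tendsto
      (fun m : ℕ => (V * r ^ α / (α + 1)) * ((m + 1 : ℝ) / m) ^ (α + 1))
      Filter.atTop (nhds (V * r ^ α / (α + 1))) := by
    have h1 : Filter.Tendsto (fun m : ℕ => ((m : ℝ) + 1) / m) Filter.atTop (nhds 1) := by
      have : ∀ᶠ m : ℕ in Filter.atTop, ((m : ℝ) + 1) / m = 1 + 1 / m := by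
        filter_upwards [Filter.eventually_ge_atTop 1] with m hm
        have : (0:ℝ) < m := by exact_mod_cast hm
        field_simp
      rw [Filter.tendsto_congr' this]
      have := tendsto_one_div_atTop_nhds_zero_nat (𝕜 := ℝ)
      have h2 := Filter.Tendsto.const_add (1 : ℝ) this
      simpa using h2
    have h2 : Filter.Tendsto (fun m : ℕ => (((m : ℝ) + 1) / m) ^ (α + 1))
        Filter.atTop (nhds 1) := by
      have hcont : ContinuousAt (fun x : ℝ => x ^ (α + 1)) 1 :=
        Real.continuousAt_rpow_const 1 (α + 1) (Or.inl one_ne_zero)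
      have := hcont.tendsto.comp h1
      simpa [Real.one_rpow, Function.comp_def] using this
    have := h2.const_mul (V * r ^ α / (α + 1))
    simpa using this
  have hev : ∀ᶠ m : ℕ in Filter.atTop,
      (∫ x in Ω, distB Ω x ^ α) ≤
        (V * r ^ α / (α + 1)) * ((m + 1 : ℝ) / m) ^ (α + 1) := by
    filter_upwards [Filter.eventually_ge_atTop 1] with m hm
    exact hmain m hm
  have := ge_of_tendsto htend hev
  calc (∫ x in Ω, distB Ω x ^ α) ≤ V * r ^ α / (α + 1) := this
  _ = (volume Ω).toReal * inradius Ω ^ α / (α + 1) := by rw [hV, hr]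

end AuxProofs
end

section
/- Let Ω ⊊ ℝ^N be a convex bounded open set, let H ⊂ ℝ^N be an affine hyperplane, let Π : ℝ^N → H be the orthogonal projection onto H, and let S ⊆ ∂Ω ∩ H be a convex set. Then the set Ω_S := { x ∈ Ω : Π(x) ∈ S and |x − Π(x)| = d_Ω(x) } is convex. -/
open MeasureTheory

set_option maxHeartbeats 2000000 in
open Metric in
theorem stmt_5 (N : ℕ) (Ω : Set (EuclideanSpace ℝ (Fin N))) (hΩ : Ω ≠ Set.univ)
    (hconv : Convex ℝ Ω) (hbd : Bornology.IsBounded Ω) (hopen : IsOpen Ω)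
    (v : EuclideanSpace ℝ (Fin N)) (hv : v ≠ 0) (c : ℝ)
    (H : Set (EuclideanSpace ℝ (Fin N))) (hH : H = {x | inner ℝ x v = (c : ℝ)})
    (P : EuclideanSpace ℝ (Fin N) → EuclideanSpace ℝ (Fin N))
    (hPmem : ∀ x, P x ∈ H)
    (hPperp : ∀ x, ∀ y ∈ H, inner ℝ (x - P x) (y - P x) = (0 : ℝ))
    (S : Set (EuclideanSpace ℝ (Fin N))) (hS : S ⊆ frontier Ω ∩ H) (hSconv : Convex ℝ S) :
    Convex ℝ {x ∈ Ω | P x ∈ S ∧ ‖x - P x‖ = Metric.infDist x (frontier Ω)} := by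
  subst hH
  have hv2 : (‖v‖:ℝ)^2 ≠ 0 := pow_ne_zero 2 (norm_ne_zero_iff.mpr hv)
  -- explicit formula for P
  have hPform : ∀ u, P u = u - (((inner ℝ u v : ℝ) - c)/‖v‖^2) • v := by
    intro u
    set t : ℝ := ((inner ℝ u v : ℝ) - c)/‖v‖^2 with ht
    have hPu : (inner ℝ (P u) v : ℝ) = c := hPmem u
    have htv : (inner ℝ (t • v) v : ℝ) = (inner ℝ u v : ℝ) - c := by
      rw [real_inner_smul_left, real_inner_self_eq_norm_sq, ht]
      field_simp
    set w := u - P u - t • v with hwdef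
    have hwv : (inner ℝ w v : ℝ) = 0 := by
      simp only [hwdef, inner_sub_left, htv, hPu]
      ring
    have hyH : w + P u ∈ {x : EuclideanSpace ℝ (Fin N) | inner ℝ x v = (c:ℝ)} := by
      simp only [Set.mem_setOf_eq, inner_add_left, hwv, hPu, zero_add]
    have h1 : (inner ℝ (u - P u) w : ℝ) = 0 := by
      have := hPperp u (w + P u) hyH
      simpa using this
    have hvw : (inner ℝ v w : ℝ) = 0 := by rw [real_inner_comm]; exact hwv
    have h2 : (inner ℝ w w : ℝ) = 0 := by
      calc (inner ℝ w w : ℝ) = inner ℝ (u - P u) w - t * inner ℝ v w := by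
            rw [hwdef, inner_sub_left, real_inner_smul_left]
        _ = 0 := by rw [h1, hvw]; ring
    have hw0 : u - P u - t • v = 0 := by rwa [inner_self_eq_zero] at h2
    have h3 : u - P u = t • v := sub_eq_zero.mp hw0
    rw [← h3]; abel
  -- concavity of infDist to complement
  have hne : Set.Nonempty Ωᶜ := Set.nonempty_compl.mpr hΩ
  have hconc : ∀ x ∈ Ω, ∀ y ∈ Ω, ∀ a b : ℝ, 0 ≤ a → 0 ≤ b → a + b = 1 →
      a * infDist x Ωᶜ + b * infDist y Ωᶜ ≤ infDist (a • x + b • y) Ωᶜ := by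
    intro x hx y hy a b ha hb hab
    set dx := infDist x Ωᶜ with hdx
    set dy := infDist y Ωᶜ with hdy
    set s := a * dx + b * dy with hsdef
    have hs0 : 0 ≤ s := by
      have := Metric.infDist_nonneg (x := x) (s := Ωᶜ)
      have := Metric.infDist_nonneg (x := y) (s := Ωᶜ)
      positivity
    rcases eq_or_lt_of_le hs0 with hs | hs
    · exact hs ▸ Metric.infDist_nonneg
    have hball : ball (a • x + b • y) s ⊆ Ω := by
      intro w hw
      set u := w - (a • x + b • y) with hu
      have hun : ‖u‖ < s := by
        rw [hu, ← dist_eq_norm]; exact mem_ball.mp hw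
      have hx' : x + (dx/s) • u ∈ Ω := by
        rcases eq_or_lt_of_le (Metric.infDist_nonneg (x := x) (s := Ωᶜ)) with h0 | h0
        · have hd0 : dx = 0 := h0.symm
          simp only [hd0, zero_div, zero_smul, add_zero]
          exact hx
        · refine Metric.ball_infDist_compl_subset (x := x) ?_
          rw [mem_ball, dist_eq_norm]
          have : ‖x + (dx/s) • u - x‖ = (dx/s) * ‖u‖ := by
            rw [add_sub_cancel_left, norm_smul, Real.norm_of_nonneg (by positivity)]
          rw [this, ← hdx]
          calc (dx/s) * ‖u‖ < (dx/s) * s := by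
                apply mul_lt_mul_of_pos_left hun (by positivity)
            _ = dx := by field_simp
      have hy' : y + (dy/s) • u ∈ Ω := by
        rcases eq_or_lt_of_le (Metric.infDist_nonneg (x := y) (s := Ωᶜ)) with h0 | h0
        · have hd0 : dy = 0 := h0.symm
          simp only [hd0, zero_div, zero_smul, add_zero]
          exact hy
        · refine Metric.ball_infDist_compl_subset (x := y) ?_
          rw [mem_ball, dist_eq_norm]
          have : ‖y + (dy/s) • u - y‖ = (dy/s) * ‖u‖ := by
            rw [add_sub_cancel_left, norm_smul, Real.norm_of_nonneg (by positivity)]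
          rw [this, ← hdy]
          calc (dy/s) * ‖u‖ < (dy/s) * s := by
                apply mul_lt_mul_of_pos_left hun (by positivity)
            _ = dy := by field_simp
      have hcoef : a * (dx/s) + b * (dy/s) = 1 := by
        field_simp [hsdef]
        exact hsdef.symm
      have heq : a • (x + (dx/s) • u) + b • (y + (dy/s) • u) = w := by
        calc a • (x + (dx/s) • u) + b • (y + (dy/s) • u)
            = (a • x + b • y) + (a * (dx/s) + b * (dy/s)) • u := by
              rw [smul_add, smul_add, smul_smul, smul_smul, add_smul]; abel
          _ = (a • x + b • y) + u := by rw [hcoef, one_smul]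
          _ = w := by rw [hu]; abel
      have := hconv hx' hy' ha hb hab
      rwa [heq] at this
    by_contra hcon
    push_neg at hcon
    obtain ⟨w, hw, hwd⟩ := (Metric.infDist_lt_iff hne).mp hcon
    exact hw (hball (by rw [mem_ball, dist_comm]; exact hwd))
  -- infDist to frontier = infDist to complement on Ω
  have heqd : ∀ u ∈ Ω, infDist u (frontier Ω) = infDist u Ωᶜ := by
    intro u hu
    obtain ⟨w, hwf, hwd⟩ := exists_mem_frontier_infDist_compl_eq_dist hu hΩ
    apply le_antisymm
    · rw [hwd]; exact Metric.infDist_le_dist_of_mem hwf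
    · apply Metric.infDist_le_infDist_of_subset _ ⟨w, hwf⟩
      intro p hp hpΩ
      exact hp.2 (by rwa [hopen.interior_eq])
  -- main argument
  intro x hx y hy a b ha hb hab
  obtain ⟨hxΩ, hxS, hxd⟩ := hx
  obtain ⟨hyΩ, hyS, hyd⟩ := hy
  set z := a • x + b • y with hz
  have hzΩ : z ∈ Ω := hconv hxΩ hyΩ ha hb hab
  have hAB : ((inner ℝ z v : ℝ) - c)/‖v‖^2
      = a * (((inner ℝ x v : ℝ) - c)/‖v‖^2) + b * (((inner ℝ y v : ℝ) - c)/‖v‖^2) := by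
    have hzin : (inner ℝ z v : ℝ) = a * (inner ℝ x v : ℝ) + b * (inner ℝ y v : ℝ) := by
      rw [hz, inner_add_left, real_inner_smul_left, real_inner_smul_left]
    rw [hzin]
    field_simp
    linear_combination c * hab
  have hPz : P z = a • P x + b • P y := by
    rw [hPform z, hPform x, hPform y, hAB, hz]
    module
  have hPzS : P z ∈ S := by rw [hPz]; exact hSconv hxS hyS ha hb hab
  have hPzF : P z ∈ frontier Ω := (hS hPzS).1
  have hsub : z - P z = a • (x - P x) + b • (y - P y) := by
    rw [hPz, hz]
    module
  have hle1 : infDist z (frontier Ω) ≤ ‖z - P z‖ := by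
    rw [← dist_eq_norm]; exact Metric.infDist_le_dist_of_mem hPzF
  have hle2 : ‖z - P z‖ ≤ a * infDist x (frontier Ω) + b * infDist y (frontier Ω) := by
    rw [hsub, ← hxd, ← hyd]
    calc ‖a • (x - P x) + b • (y - P y)‖ ≤ ‖a • (x - P x)‖ + ‖b • (y - P y)‖ :=
          norm_add_le _ _
      _ = a * ‖x - P x‖ + b * ‖y - P y‖ := by
          rw [norm_smul, norm_smul, Real.norm_of_nonneg ha, Real.norm_of_nonneg hb]
  have hle3 : a * infDist x (frontier Ω) + b * infDist y (frontier Ω)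
      ≤ infDist z (frontier Ω) := by
    rw [heqd x hxΩ, heqd y hyΩ, heqd z hzΩ]
    exact hconc x hxΩ y hyΩ a b ha hb hab
  exact ⟨hzΩ, hPzS, le_antisymm (hle2.trans hle3) hle1⟩
end
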